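/- arXiv:1802.09157 — 7 statements merged into one kernel-verified Lean document; each statement's English description precedes it below -/
import Mathlib

section
/- Let φ : 𝒫_c → 𝒫_c preserve the transition probability, and let P₁, P₂, Q ∈ 𝒫_c with P₁P₂ = 0. Then Q ≤ P₁ + P₂ if and only if φ(Q) ≤ φ(P₁) + φ(P₂). -/
/-! For projections `p, q` the number `tr (p q) = tr ((q p)ᴴ (q p))` is the squared
Frobenius norm of `q p`; it vanishes only when `p q = 0`. Applied to `p` and `1 - q`, this
characterises `p ≤ q` by `tr (p q) = tr p`. Both conditions are therefore expressed through
traces of products, which `φ` preserves. -/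

open Matrix
open scoped ComplexOrder

/-- `𝒫_c`: projections of trace `c` in `M_n(ℂ)`. -/
def MemGrassmann (n c : ℕ) (P : Matrix (Fin n) (Fin n) ℂ) : Prop :=
  P.IsHermitian ∧ P * P = P ∧ P.trace = (c : ℂ)

namespace Matrix.IsStarProjection

variable {m R : Type*} [Fintype m] [CommRing R] [PartialOrder R] [StarRing R]
  [StarOrderedRing R] [NoZeroDivisors R] {p q : Matrix m m R}

theorem mul_eq_zero_of_trace_mul_eq_zero (hp : IsStarProjection p) (hq : IsStarProjection q)
    (h : (p * q).trace = 0) : p * q = 0 := by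
  have hstar : (q * p)ᴴ = p * q := by
    rw [conjTranspose_mul]
    exact congr_arg₂ (· * ·) hp.isSelfAdjoint hq.isSelfAdjoint
  have hnorm : ((q * p)ᴴ * (q * p)).trace = (p * q).trace := by
    rw [hstar, ← Matrix.mul_assoc, Matrix.mul_assoc p, hq.isIdempotentElem.eq, trace_mul_comm,
      ← Matrix.mul_assoc, hp.isIdempotentElem.eq]
  have hqp : q * p = 0 := trace_conjTranspose_mul_self_eq_zero_iff.mp (hnorm.trans h)
  rw [← hstar, hqp, conjTranspose_zero]

theorem mul_eq_left_iff_trace_mul_eq_trace [DecidableEq m] (hp : IsStarProjection p) (hq : IsStarProjection q) :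
    p * q = p ↔ (p * q).trace = p.trace := by
  refine ⟨fun h ↦ by rw [h], fun h ↦ ?_⟩
  have hcompl : p * (1 - q) = 0 :=
    hp.mul_eq_zero_of_trace_mul_eq_zero hq.one_sub
      (by rw [Matrix.mul_sub, Matrix.mul_one, trace_sub, h, sub_self])
  rw [Matrix.mul_sub, Matrix.mul_one, sub_eq_zero] at hcompl
  exact hcompl.symm

end Matrix.IsStarProjection

theorem MemGrassmann.isStarProjection {n c : ℕ} {P : Matrix (Fin n) (Fin n) ℂ}
    (hP : MemGrassmann n c P) : IsStarProjection P :=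
  ⟨hP.2.1, hP.1⟩

theorem stmt4_general {n c : ℕ}
    (φ : Matrix (Fin n) (Fin n) ℂ → Matrix (Fin n) (Fin n) ℂ)
    (hmap : ∀ P, MemGrassmann n c P → MemGrassmann n c (φ P))
    (hpres : ∀ P Q, MemGrassmann n c P → MemGrassmann n c Q →
      (φ P * φ Q).trace = (P * Q).trace)
    (P₁ P₂ Q : Matrix (Fin n) (Fin n) ℂ)
    (hP₁ : MemGrassmann n c P₁) (hP₂ : MemGrassmann n c P₂) (hQ : MemGrassmann n c Q)
    (horth : P₁ * P₂ = 0) :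
    Q * (P₁ + P₂) = Q ↔ φ Q * (φ P₁ + φ P₂) = φ Q := by
  have hφorth : φ P₁ * φ P₂ = 0 :=
    (hmap P₁ hP₁).isStarProjection.mul_eq_zero_of_trace_mul_eq_zero
      (hmap P₂ hP₂).isStarProjection (by rw [hpres P₁ P₂ hP₁ hP₂, horth, trace_zero])
  have hsum := hP₁.isStarProjection.add hP₂.isStarProjection horth
  have hφsum := (hmap P₁ hP₁).isStarProjection.add (hmap P₂ hP₂).isStarProjection hφorth
  have htrace_mul : (φ Q * (φ P₁ + φ P₂)).trace = (Q * (P₁ + P₂)).trace := by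
    rw [Matrix.mul_add, Matrix.mul_add, trace_add, trace_add, hpres Q P₁ hQ hP₁,
      hpres Q P₂ hQ hP₂]
  rw [hQ.isStarProjection.mul_eq_left_iff_trace_mul_eq_trace hsum,
    (hmap Q hQ).isStarProjection.mul_eq_left_iff_trace_mul_eq_trace hφsum, htrace_mul,
    hQ.2.2, (hmap Q hQ).2.2]

/-- For a transition probability preserving map `φ` on `𝒫_c` and orthogonal `P₁, P₂`,
`Q ≤ P₁ + P₂` iff `φ(Q) ≤ φ(P₁) + φ(P₂)`. -/
theorem stmt4 {n c : ℕ} (hc0 : 0 < c) (hcn : c < n)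
    (φ : Matrix (Fin n) (Fin n) ℂ → Matrix (Fin n) (Fin n) ℂ)
    (hmap : ∀ P, MemGrassmann n c P → MemGrassmann n c (φ P))
    (hpres : ∀ P Q, MemGrassmann n c P → MemGrassmann n c Q →
      (φ P * φ Q).trace = (P * Q).trace)
    (P₁ P₂ Q : Matrix (Fin n) (Fin n) ℂ)
    (hP₁ : MemGrassmann n c P₁) (hP₂ : MemGrassmann n c P₂) (hQ : MemGrassmann n c Q)
    (horth : P₁ * P₂ = 0) :
    Q * (P₁ + P₂) = Q ↔ φ Q * (φ P₁ + φ P₂) = φ Q :=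
  stmt4_general φ hmap hpres P₁ P₂ Q hP₁ hP₂ hQ horth
end

section
/- Let Q be an orthogonal projection of trace c/m in M_n(ℂ), where m ≥ 2 and m divides c and 2c ≤ n. Then there exist m+1 mutually commuting orthogonal projections P₀, P₁, …, P_m, each of trace c, such that m·Q = P₁ + ⋯ + P_m − (m−1)·P₀. -/
/-!
A projection `Q` of rank `r = c / m` is `U diag(1_E) U*` for a unitary `U` and an `r`-set `E` of
indices. As `r + c ≤ n`, there is room outside `E` for an `m × r` array of `c` further indices.
Let `P₀` be the diagonal projection onto the array and `Pᵢ` (`1 ≤ i ≤ m`) the one onto `E` together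
with all rows of the array but the `i`-th, all conjugated by `U`. Each has trace `c`, they commute,
and `P₁ + ⋯ + P_m` counts each index of `E` `m` times and each index of the array `m - 1` times.
-/

open Finset Unitary

namespace Matrix

section unitaryDiagonal

variable {R n : Type*} [CommRing R] [StarRing R] [Fintype n] [DecidableEq n]

noncomputable def unitaryDiagonal (U : unitaryGroup n R) : (n → R) →ₐ[R] Matrix n n R :=
  (conjStarAlgAut R _ U : Matrix n n R →ₐ[R] Matrix n n R).comp (diagonalAlgHom R)

theorem unitaryDiagonal_apply (U : unitaryGroup n R) (f : n → R) :
    unitaryDiagonal U f = conjStarAlgAut R _ U (diagonal f) := rfl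

theorem trace_unitaryDiagonal_indicator (U : unitaryGroup n R) (s : Finset n) :
    (unitaryDiagonal U ((s : Set n).indicator 1)).trace = #s := by
  rw [unitaryDiagonal_apply, conjStarAlgAut_apply, trace_mul_cycle, coe_star_mul_self,
    one_mul, trace_diagonal]
  simp [Set.indicator_apply]

theorem isStarProjection_unitaryDiagonal_indicator (U : unitaryGroup n R) (s : Set n) :
    IsStarProjection (unitaryDiagonal U (s.indicator 1)) := by
  have hs : IsStarProjection (diagonal (s.indicator 1 : n → R)) := by
    refine ⟨?_, ?_⟩
    · rw [IsIdempotentElem, diagonal_mul_diagonal]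
      congr 1
      ext k
      by_cases hk : k ∈ s <;> simp [hk]
    · rw [IsSelfAdjoint, star_eq_conjTranspose, diagonal_conjTranspose]
      congr 1
      ext k
      by_cases hk : k ∈ s <;> simp [hk]
  exact hs.map (conjStarAlgAut R _ U)

end unitaryDiagonal

variable {𝕜 n : Type*} [RCLike 𝕜] [Fintype n] [DecidableEq n]

theorem IsHermitian.eigenvalues_eq_zero_or_one {A : Matrix n n 𝕜} (hA : A.IsHermitian)
    (hA' : IsIdempotentElem A) (k : n) : hA.eigenvalues k = 0 ∨ hA.eigenvalues k = 1 := by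
  simpa using hA'.spectrum_subset ℝ (hA.eigenvalues_mem_spectrum_real k)

theorem IsHermitian.exists_unitaryDiagonal_indicator_eq {A : Matrix n n 𝕜} (hA : A.IsHermitian)
    (hA' : IsIdempotentElem A) :
    ∃ (U : unitaryGroup n 𝕜) (E : Finset n), unitaryDiagonal U ((E : Set n).indicator 1) = A := by
  refine ⟨hA.eigenvectorUnitary, univ.filter (hA.eigenvalues · = 1), ?_⟩
  refine .trans ?_ hA.spectral_theorem.symm
  rw [unitaryDiagonal_apply]
  congr 2
  ext k
  rcases hA.eigenvalues_eq_zero_or_one hA' k with hk | hk <;> simp [hk]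

end Matrix

section BlockFinsets

variable {α : Type*} [DecidableEq α] {m r : ℕ}

def blockFinsets (E : Finset α) (ψ : Fin m × Fin r ↪ α) : Fin (m + 1) → Finset α :=
  Fin.cons (univ.map ψ) fun i => E ∪ (({i}ᶜ ×ˢ univ).map ψ)

variable {E : Finset α} {ψ : Fin m × Fin r ↪ α}

theorem card_blockFinsets (hE : #E = r) (hψ : ∀ p, ψ p ∉ E) (i : Fin (m + 1)) :
    #(blockFinsets E ψ i) = m * r := by
  induction i using Fin.cases with
  | zero => simp [blockFinsets]
  | succ i =>
    have hdisj : Disjoint E (({i}ᶜ ×ˢ univ).map ψ) :=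
      disjoint_left.2 fun k hk hk' => by
        obtain ⟨p, -, rfl⟩ := mem_map.1 hk'
        exact hψ p hk
    rw [blockFinsets, Fin.cons_succ, card_union_of_disjoint hdisj, card_map, card_product,
      card_compl, card_singleton, card_univ, Fintype.card_fin, Fintype.card_fin, hE]
    obtain ⟨m, rfl⟩ := Nat.exists_eq_add_of_le' i.pos
    simp only [Nat.add_sub_cancel]
    ring

theorem sum_indicator_blockFinsets {R : Type*} [AddCommGroupWithOne R] (hψ : ∀ p, ψ p ∉ E) :
    ∑ i, (blockFinsets E ψ i : Set α).indicator (1 : α → R) =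
      m • (E : Set α).indicator 1 + m • (blockFinsets E ψ 0 : Set α).indicator 1 := by
  ext k
  simp only [Fin.sum_univ_succ, blockFinsets, Fin.cons_zero, Fin.cons_succ, Finset.sum_apply,
    Pi.add_apply, Pi.smul_apply, Set.indicator_apply, mem_coe]
  by_cases hk : k ∈ E
  · have hne : ∀ p, ψ p ≠ k := fun p h => hψ p (h ▸ hk)
    simp [hk, hne]
  obtain ⟨p, rfl⟩ | hne := em (∃ p, ψ p = k)
  · have hrow : ∑ i : Fin m, (if p.1 = i then (0 : R) else 1) = (m - 1 : ℕ) := by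
      simp [sum_ite, filter_ne]
    simp [hk, hrow, Nat.cast_pred p.1.pos]
  · simp only [not_exists] at hne
    simp [hk, hne]

theorem exists_embedding_forall_notMem [Fintype α] (h : m * r + #E ≤ Fintype.card α) :
    ∃ ψ : Fin m × Fin r ↪ α, ∀ p, ψ p ∉ E := by
  obtain ⟨ψ⟩ := Function.Embedding.nonempty_of_card_le (α := Fin m × Fin r)
    (β := {k // k ∉ E}) (by
      rw [Fintype.card_subtype_compl, Fintype.card_prod, Fintype.card_fin, Fintype.card_fin,
        Fintype.card_coe]
      omega)
  exact ⟨ψ.trans (Function.Embedding.subtype _), fun p => (ψ p).2⟩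

end BlockFinsets

theorem stmt5_general {n c m : ℕ} (hdvd : m ∣ c) (h2c : 2 * c ≤ n)
    (Q : Matrix (Fin n) (Fin n) ℂ)
    (hQ : Q.IsHermitian ∧ Q * Q = Q ∧ Q.trace = ((c / m : ℕ) : ℂ)) :
    ∃ P : Fin (m + 1) → Matrix (Fin n) (Fin n) ℂ,
      (∀ i, (P i).IsHermitian ∧ P i * P i = P i ∧ (P i).trace = (c : ℂ)) ∧
      (∀ i j, P i * P j = P j * P i) ∧
      (m : ℂ) • Q = (∑ i, P i) - (m : ℂ) • P 0 := by
  obtain ⟨hH, hidem, htr⟩ := hQ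
  obtain ⟨U, E, rfl⟩ := hH.exists_unitaryDiagonal_indicator_eq hidem
  have hE : #E = c / m := by
    exact_mod_cast (Matrix.trace_unitaryDiagonal_indicator U E).symm.trans htr
  have hc : m * (c / m) = c := Nat.mul_div_cancel' hdvd
  obtain ⟨ψ, hψ⟩ := exists_embedding_forall_notMem (E := E) (m := m) (r := c / m) (by
    rw [hc, hE, Fintype.card_fin]
    have := Nat.div_le_self c m
    omega)
  refine ⟨fun i => Matrix.unitaryDiagonal U ((blockFinsets E ψ i : Set (Fin n)).indicator 1),
    fun i => ?_, fun i j => ?_, ?_⟩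
  · have hP := Matrix.isStarProjection_unitaryDiagonal_indicator U (blockFinsets E ψ i)
    refine ⟨hP.isSelfAdjoint, hP.isIdempotentElem, ?_⟩
    rw [Matrix.trace_unitaryDiagonal_indicator, card_blockFinsets hE hψ, hc]
  · rw [← map_mul, ← map_mul, mul_comm]
  · rw [← map_sum, Nat.cast_smul_eq_nsmul, Nat.cast_smul_eq_nsmul, ← map_nsmul, ← map_nsmul,
      ← map_sub, sum_indicator_blockFinsets hψ, add_sub_cancel_right]

/-- Every projection of trace `c/m` is of the form
`(1/m)[P₁ + ⋯ + P_m − (m−1)P₀]` for mutually commuting projections `P_i` of trace `c`. -/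
theorem stmt5 {n c m : ℕ} (hm : 2 ≤ m) (hdvd : m ∣ c) (h2c : 2 * c ≤ n) (hcm : 1 ≤ c / m)
    (Q : Matrix (Fin n) (Fin n) ℂ)
    (hQ : Q.IsHermitian ∧ Q * Q = Q ∧ Q.trace = ((c / m : ℕ) : ℂ)) :
    ∃ P : Fin (m + 1) → Matrix (Fin n) (Fin n) ℂ,
      (∀ i, (P i).IsHermitian ∧ P i * P i = P i ∧ (P i).trace = (c : ℂ)) ∧
      (∀ i j, P i * P j = P j * P i) ∧
      (m : ℂ) • Q = (∑ i, P i) - (m : ℂ) • P 0 :=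
  stmt5_general hdvd h2c Q hQ
end

section
/- Suppose Q is a projection of trace c/m in M_n(ℂ) and Q = (1/m)[P₁ + ⋯ + P_m − (m−1)P₀] where each P_i is a projection of trace c. Then Q ≤ P_i for i = 1, …, m and Q·P₀ = 0. -/
open Finset Matrix

open Finset Matrix

lemma trace_conjT_mul (k : ℕ) (A : Matrix (Fin k) (Fin k) ℂ) :
    (Aᴴ * A).trace = ((∑ i, ∑ j, Complex.normSq (A j i) : ℝ) : ℂ) := by
  push_cast
  simp only [Matrix.trace, Matrix.diag, Matrix.mul_apply, Matrix.conjTranspose_apply]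
  refine Finset.sum_congr rfl fun i _ => Finset.sum_congr rfl fun j _ => ?_
  rw [Complex.normSq_eq_conj_mul_self]
  rfl

lemma ns_nonneg (k : ℕ) (A : Matrix (Fin k) (Fin k) ℂ) :
    0 ≤ ∑ i, ∑ j, Complex.normSq (A j i) :=
  Finset.sum_nonneg fun _ _ => Finset.sum_nonneg fun _ _ => Complex.normSq_nonneg _

lemma ns_eq_zero (k : ℕ) (A : Matrix (Fin k) (Fin k) ℂ)
    (h : ∑ i, ∑ j, Complex.normSq (A j i) = 0) : A = 0 := by
  ext j i
  have h1 := (Finset.sum_eq_zero_iff_of_nonneg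
    (fun i _ => Finset.sum_nonneg fun j _ => Complex.normSq_nonneg _)).mp h i (mem_univ i)
  have h2 := (Finset.sum_eq_zero_iff_of_nonneg
    (fun j _ => Complex.normSq_nonneg _)).mp h1 j (mem_univ j)
  simpa using Complex.normSq_eq_zero.mp h2

/-- If `m Q = P₁ + ⋯ + P_m − (m−1)P₀` with all `P_i` projections of trace `c` and `Q` a
projection of trace `c/m`, then `Q ≤ P_i` for `i ≥ 1` and `Q ⊥ P₀`. -/
theorem stmt7 {n c m : ℕ} (hm : 2 ≤ m) (hdvd : m ∣ c)
    (Q : Matrix (Fin n) (Fin n) ℂ) (P : Fin (m + 1) → Matrix (Fin n) (Fin n) ℂ)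
    (hQ : Q.IsHermitian ∧ Q * Q = Q ∧ Q.trace = ((c / m : ℕ) : ℂ))
    (hP : ∀ i, (P i).IsHermitian ∧ P i * P i = P i ∧ (P i).trace = (c : ℂ))
    (hid : (m : ℂ) • Q = (∑ i, P i) - (m : ℂ) • P 0) :
    (∀ i, i ≠ 0 → Q * P i = Q) ∧ Q * P 0 = 0 := by
  obtain ⟨hQh, hQ2, -⟩ := hQ
  set ns : Matrix (Fin n) (Fin n) ℂ → ℝ := fun A => ∑ i, ∑ j, Complex.normSq (A j i) with hns
  have hB : ∀ i, Q - Q * P i * Q = ((1 - P i) * Q)ᴴ * ((1 - P i) * Q) := by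
    intro i
    obtain ⟨hPh, hP2, -⟩ := hP i
    have hproj : (1 - P i) * (1 - P i) = 1 - P i := by
      simp only [Matrix.sub_mul, Matrix.mul_sub, Matrix.one_mul, Matrix.mul_one, hP2]
      abel
    rw [Matrix.conjTranspose_mul, Matrix.conjTranspose_sub, Matrix.conjTranspose_one,
      hQh.eq, hPh.eq]
    calc Q - Q * P i * Q = Q * (1 - P i) * Q := by
          rw [Matrix.mul_sub, Matrix.mul_one, Matrix.sub_mul, hQ2]
      _ = Q * ((1 - P i) * (1 - P i)) * Q := by rw [hproj]
      _ = Q * (1 - P i) * ((1 - P i) * Q) := by simp only [Matrix.mul_assoc]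
  have hB0 : Q * P 0 * Q = (P 0 * Q)ᴴ * (P 0 * Q) := by
    obtain ⟨hPh, hP2, -⟩ := hP 0
    rw [Matrix.conjTranspose_mul, hQh.eq, hPh.eq]
    calc Q * P 0 * Q = Q * (P 0 * P 0) * Q := by rw [hP2]
      _ = Q * P 0 * (P 0 * Q) := by simp only [Matrix.mul_assoc]
  have htr : ∀ i, (Q * P i * Q).trace = Q.trace - (ns ((1 - P i) * Q) : ℂ) := by
    intro i
    have := congrArg Matrix.trace (hB i)
    rw [trace_conjT_mul, Matrix.trace_sub] at this
    linear_combination -this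
  have htr0 : (Q * P 0 * Q).trace = (ns (P 0 * Q) : ℂ) := by
    rw [hB0, trace_conjT_mul]
  have key : (m : ℂ) • Q = (∑ i, Q * P i * Q) - (m : ℂ) • (Q * P 0 * Q) := by
    have lhs : Q * ((m : ℂ) • Q) * Q = (m : ℂ) • Q := by
      rw [Matrix.mul_smul, Matrix.smul_mul, hQ2, hQ2]
    rw [← lhs]
    nth_rewrite 1 [hid]
    simp only [Matrix.mul_sub, Matrix.sub_mul, Matrix.sum_mul, Matrix.mul_sum,
      Matrix.smul_mul, Matrix.mul_smul, Matrix.mul_assoc]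
  have tkey := congrArg Matrix.trace key
  rw [Matrix.trace_sub, Matrix.trace_smul, Matrix.trace_smul, Matrix.trace_sum] at tkey
  simp only [htr, htr0, smul_eq_mul] at tkey
  rw [Finset.sum_sub_distrib, Finset.sum_const, Finset.card_univ, Fintype.card_fin,
    nsmul_eq_mul, ← Finset.add_sum_erase Finset.univ
      (fun x => ((ns ((1 - P x) * Q) : ℝ) : ℂ)) (Finset.mem_univ 0)] at tkey
  have hQtr : Q.trace = (ns ((1 - P 0) * Q) : ℂ) + (ns (P 0 * Q) : ℂ) := by
    have h := htr 0
    rw [htr0] at h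
    linear_combination -h
  have real_eq : ((∑ i ∈ Finset.univ.erase 0, ns ((1 - P i) * Q)
      + ((m : ℝ) - 1) * ns (P 0 * Q) : ℝ) : ℂ) = ((0 : ℝ) : ℂ) := by
    push_cast
    push_cast at tkey
    linear_combination tkey - ((m : ℂ) - 1) * hQtr
  have real_eq' : (∑ i ∈ Finset.univ.erase 0, ns ((1 - P i) * Q))
      + ((m : ℝ) - 1) * ns (P 0 * Q) = 0 := Complex.ofReal_injective real_eq
  have hsum_nonneg : ∀ i ∈ Finset.univ.erase (0 : Fin (m+1)), 0 ≤ ns ((1 - P i) * Q) :=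
    fun i _ => ns_nonneg n _
  have hm2 : (2 : ℝ) ≤ (m : ℝ) := by exact_mod_cast hm
  have ht0 : ns (P 0 * Q) = 0 := by
    have h1 := ns_nonneg n (P 0 * Q)
    have h2 := Finset.sum_nonneg hsum_nonneg
    nlinarith
  have hsums : ∑ i ∈ Finset.univ.erase (0 : Fin (m+1)), ns ((1 - P i) * Q) = 0 := by
    rw [ht0] at real_eq'; linarith
  refine ⟨fun i hi => ?_, ?_⟩
  · have hterm : ns ((1 - P i) * Q) = 0 :=
      (Finset.sum_eq_zero_iff_of_nonneg hsum_nonneg).mp hsums i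
        (Finset.mem_erase.mpr ⟨hi, Finset.mem_univ i⟩)
    have hA : (1 - P i) * Q = 0 := ns_eq_zero n _ hterm
    rw [Matrix.sub_mul, Matrix.one_mul, sub_eq_zero] at hA
    have := congrArg Matrix.conjTranspose hA.symm
    rw [Matrix.conjTranspose_mul, hQh.eq, (hP i).1.eq] at this
    exact this
  · have hA : P 0 * Q = 0 := ns_eq_zero n _ ht0
    have := congrArg Matrix.conjTranspose hA
    rw [Matrix.conjTranspose_mul, hQh.eq, (hP 0).1.eq, Matrix.conjTranspose_zero] at this
    exact this
end

section
/- Let σ₁ : M_n(ℂ) → M_k(ℂ) be a unital *-homomorphism and σ₂ : M_n(ℂ) → M_l(ℂ) a unital *-anti-homomorphism, and suppose trace(σ₁(A) ⊕ σ₂(A)) = trace(A) for all A ∈ M_n(ℂ), where ⊕ denotes the block-diagonal embedding into M_{k+l}(ℂ). Then the map φ(P) = σ₁(P) ⊕ σ₂(P) on projections of trace c preserves the transition probability: trace(φ(P)φ(Q)) = trace(PQ) for all projections P, Q of trace c. -/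
open Matrix

/-! The trace of the product splits over the two blocks, the anti-multiplicativity of `σ₂` is
absorbed by the cyclicity of the trace, and the two blocks then recombine into
`σ₁ (P * Q) ⊕ σ₂ (P * Q)`, whose trace is that of `P * Q`. -/

theorem Matrix.trace_fromBlocks_zero₁₂_zero₂₁ {m n R : Type*} [Fintype m] [Fintype n]
    [AddCommMonoid R] (A : Matrix m m R) (D : Matrix n n R) :
    (fromBlocks A 0 0 D).trace = A.trace + D.trace := by
  simp [trace, Fintype.sum_sum_type]

theorem Matrix.trace_fromBlocks_diag_mul_fromBlocks_diag {m n R : Type*} [Fintype m] [Fintype n]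
    [NonUnitalNonAssocSemiring R] (A A' : Matrix m m R) (D D' : Matrix n n R) :
    (fromBlocks A 0 0 D * fromBlocks A' 0 0 D').trace = (A * A').trace + (D * D').trace := by
  simp [fromBlocks_multiply, trace_fromBlocks_zero₁₂_zero₂₁]

theorem stmt9_general {n k l : ℕ}
    (σ₁ : Matrix (Fin n) (Fin n) ℂ →ₐ[ℂ] Matrix (Fin k) (Fin k) ℂ)
    (σ₂ : Matrix (Fin n) (Fin n) ℂ →ₗ[ℂ] Matrix (Fin l) (Fin l) ℂ)
    (hmul2 : ∀ A B, σ₂ (A * B) = σ₂ B * σ₂ A)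
    (htr : ∀ A : Matrix (Fin n) (Fin n) ℂ,
      (Matrix.fromBlocks (σ₁ A) 0 0 (σ₂ A)).trace = A.trace)
    (P Q : Matrix (Fin n) (Fin n) ℂ) :
    (Matrix.fromBlocks (σ₁ P) 0 0 (σ₂ P) *
      Matrix.fromBlocks (σ₁ Q) 0 0 (σ₂ Q)).trace = (P * Q).trace := by
  calc (fromBlocks (σ₁ P) 0 0 (σ₂ P) * fromBlocks (σ₁ Q) 0 0 (σ₂ Q)).trace
      = (σ₁ P * σ₁ Q).trace + (σ₂ P * σ₂ Q).trace :=
        trace_fromBlocks_diag_mul_fromBlocks_diag _ _ _ _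
    _ = (σ₁ (P * Q)).trace + (σ₂ (P * Q)).trace := by
        rw [map_mul, hmul2, trace_mul_comm (σ₂ P)]
    _ = (P * Q).trace := by rw [← htr, trace_fromBlocks_zero₁₂_zero₂₁]

/-- The block-diagonal sum of a unital *-homomorphism and a unital *-anti-homomorphism
which together preserve the trace gives a transition probability preserving map on
projections of trace `c`. -/
theorem stmt9 {n k l c : ℕ}
    (σ₁ : Matrix (Fin n) (Fin n) ℂ →ₐ[ℂ] Matrix (Fin k) (Fin k) ℂ)
    (hstar1 : ∀ A : Matrix (Fin n) (Fin n) ℂ, σ₁ Aᴴ = (σ₁ A)ᴴ)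
    (σ₂ : Matrix (Fin n) (Fin n) ℂ →ₗ[ℂ] Matrix (Fin l) (Fin l) ℂ)
    (hmul2 : ∀ A B, σ₂ (A * B) = σ₂ B * σ₂ A) (hone2 : σ₂ 1 = 1)
    (hstar2 : ∀ A : Matrix (Fin n) (Fin n) ℂ, σ₂ Aᴴ = (σ₂ A)ᴴ)
    (htr : ∀ A : Matrix (Fin n) (Fin n) ℂ,
      (Matrix.fromBlocks (σ₁ A) 0 0 (σ₂ A)).trace = A.trace)
    (P Q : Matrix (Fin n) (Fin n) ℂ)
    (hP : P.IsHermitian ∧ P * P = P ∧ P.trace = (c : ℂ))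
    (hQ : Q.IsHermitian ∧ Q * Q = Q ∧ Q.trace = (c : ℂ)) :
    (Matrix.fromBlocks (σ₁ P) 0 0 (σ₂ P) *
      Matrix.fromBlocks (σ₁ Q) 0 0 (σ₂ Q)).trace = (P * Q).trace :=
  stmt9_general σ₁ σ₂ hmul2 htr P Q
end

section
/- Let Φ : M_n(ℂ) → M_m(ℂ) be a linear map such that Φ(P) is a projection for every projection P, and Φ(P + Q) = Φ(P) + Φ(Q) whenever P, Q are orthogonal projections. Then Φ(H) is self-adjoint and Φ(H²) = Φ(H)² for every self-adjoint H ∈ M_n(ℂ). -/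
/-!
Diagonalise `H = ∑ cᵢ Eᵢ` with real `cᵢ` and pairwise orthogonal projections `Eᵢ`, so that
`H² = ∑ cᵢ² Eᵢ`. The images `Φ Eᵢ` are again projections, and they are pairwise orthogonal:
`Φ Eᵢ + Φ Eⱼ = Φ (Eᵢ + Eⱼ)` is idempotent, which forces `Φ Eᵢ` and `Φ Eⱼ` to anticommute, and an
idempotent anticommuting with `x` annihilates it. Hence `Φ H = ∑ cᵢ Φ Eᵢ` is self-adjoint and its
square is `∑ cᵢ² Φ Eᵢ = Φ (H²)`.
-/

open Matrix

variable {ι R A B : Type*}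

lemma OrthogonalIdempotents.sum_smul_mul_sum_smul [CommSemiring R] [Semiring A] [Algebra R A]
    {e : ι → A} (he : OrthogonalIdempotents e) (s : Finset ι) (a b : ι → R) :
    (∑ i ∈ s, a i • e i) * (∑ i ∈ s, b i • e i) = ∑ i ∈ s, (a i * b i) • e i := by
  rw [Finset.sum_mul_sum]
  refine Finset.sum_congr rfl fun i hi => ?_
  rw [Finset.sum_eq_single_of_mem i hi fun j _ hji => by
    rw [smul_mul_smul_comm, he.ortho hji.symm, smul_zero]]
  rw [smul_mul_smul_comm, (he.idem i).eq]

section OrthoadditiveOnProjections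

variable [Semiring A] [StarRing A] [Semiring B] [StarRing B] [IsCancelAdd B] [IsAddTorsionFree B]

lemma map_mul_map_eq_zero_of_isStarProjection (Φ : A → B)
    (hproj : ∀ p, IsStarProjection p → IsStarProjection (Φ p))
    (hadd : ∀ p q, IsStarProjection p → IsStarProjection q → p * q = 0 → Φ (p + q) = Φ p + Φ q)
    {p q : A} (hp : IsStarProjection p) (hq : IsStarProjection q) (hpq : p * q = 0) :
    Φ p * Φ q = 0 := by
  have hsum : IsIdempotentElem (Φ p + Φ q) :=
    hadd p q hp hq hpq ▸ (hproj _ (hp.add hq hpq)).isIdempotentElem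
  have hanti : Φ p * Φ q + Φ q * Φ p = 0 :=
    ((hproj p hp).isIdempotentElem.add_iff (hproj q hq).isIdempotentElem).mp hsum
  exact (hproj p hp).isIdempotentElem.mul_eq_zero_of_anticommute hanti

lemma orthogonalIdempotents_comp_of_isStarProjection (Φ : A → B)
    (hproj : ∀ p, IsStarProjection p → IsStarProjection (Φ p))
    (hadd : ∀ p q, IsStarProjection p → IsStarProjection q → p * q = 0 → Φ (p + q) = Φ p + Φ q)
    {E : ι → A} (hE : ∀ i, IsStarProjection (E i)) (horth : OrthogonalIdempotents E) :
    OrthogonalIdempotents (Φ ∘ E) where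
  idem i := (hproj _ (hE i)).isIdempotentElem
  ortho _ _ hij :=
    map_mul_map_eq_zero_of_isStarProjection Φ hproj hadd (hE _) (hE _) (horth.ortho hij)

theorem map_sum_smul_mul_sum_smul [CommSemiring R] [Algebra R A] [Algebra R B] [Fintype ι]
    (Φ : A →ₗ[R] B) (hproj : ∀ p, IsStarProjection p → IsStarProjection (Φ p))
    (hadd : ∀ p q, IsStarProjection p → IsStarProjection q → p * q = 0 → Φ (p + q) = Φ p + Φ q)
    {E : ι → A} (hE : ∀ i, IsStarProjection (E i)) (horth : OrthogonalIdempotents E)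
    (a b : ι → R) :
    Φ ((∑ i, a i • E i) * (∑ i, b i • E i)) = Φ (∑ i, a i • E i) * Φ (∑ i, b i • E i) := by
  have hΦE := orthogonalIdempotents_comp_of_isStarProjection Φ hproj hadd hE horth
  simp only [horth.sum_smul_mul_sum_smul, map_sum, map_smul]
  exact (hΦE.sum_smul_mul_sum_smul _ a b).symm

end OrthoadditiveOnProjections

lemma Matrix.orthogonalIdempotents_single_one {n α : Type*} [Fintype n] [DecidableEq n]
    [Semiring α] : OrthogonalIdempotents fun i : n => single i i (1 : α) where
  idem i := by simp [IsIdempotentElem]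
  ortho _ _ hij := by simp [hij]

theorem Matrix.IsHermitian.exists_eq_sum_smul_isStarProjection {𝕜 n : Type*} [RCLike 𝕜]
    [Fintype n] [DecidableEq n] {H : Matrix n n 𝕜} (hH : H.IsHermitian) :
    ∃ (c : n → ℝ) (E : n → Matrix n n 𝕜), (∀ i, IsStarProjection (E i)) ∧
      OrthogonalIdempotents E ∧ H = ∑ i, c i • E i := by
  let U := Unitary.conjStarAlgAut 𝕜 _ hH.eigenvectorUnitary
  refine ⟨hH.eigenvalues, fun i => U (single i i 1), fun i => ?_,
    orthogonalIdempotents_single_one.map U.toRingEquiv.toRingHom, ?_⟩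
  · exact IsStarProjection.map ⟨by simp [IsIdempotentElem],
      by simp [IsSelfAdjoint, star_eq_conjTranspose, conjTranspose_single]⟩ U
  · conv_lhs => rw [hH.spectral_theorem, ← sum_single_eq_diagonal, map_sum]
    refine Finset.sum_congr rfl fun i _ => ?_
    rw [Function.comp_apply, ← mul_one (RCLike.ofReal _), ← RCLike.real_smul_eq_coe_mul,
      ← smul_single]
    exact LinearMapClass.map_smul_of_tower U _ _

/-- A linear map taking projections to projections and orthoadditive on projections is
self-adjoint on hermitian elements and squares them correctly. -/
theorem stmt11 {n m : ℕ}
    (Φ : Matrix (Fin n) (Fin n) ℂ →ₗ[ℂ] Matrix (Fin m) (Fin m) ℂ)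
    (hproj : ∀ P : Matrix (Fin n) (Fin n) ℂ, P.IsHermitian → P * P = P →
      (Φ P).IsHermitian ∧ Φ P * Φ P = Φ P)
    (hadd : ∀ P Q : Matrix (Fin n) (Fin n) ℂ, P.IsHermitian → P * P = P →
      Q.IsHermitian → Q * Q = Q → P * Q = 0 → Φ (P + Q) = Φ P + Φ Q)
    (H : Matrix (Fin n) (Fin n) ℂ) (hH : H.IsHermitian) :
    (Φ H).IsHermitian ∧ Φ (H * H) = Φ H * Φ H := by
  obtain ⟨c, E, hE, horth, rfl⟩ := hH.exists_eq_sum_smul_isStarProjection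
  have hproj' (P) (hP : IsStarProjection P) : IsStarProjection (Φ P) :=
    (isStarProjection_iff' ..).mpr (hproj P hP.isSelfAdjoint hP.isIdempotentElem).symm
  have hadd' (P Q) (hP : IsStarProjection P) (hQ : IsStarProjection Q) :=
    hadd P Q hP.isSelfAdjoint hP.isIdempotentElem hQ.isSelfAdjoint hQ.isIdempotentElem
  have := IsAddTorsionFree.of_module_rat (Matrix (Fin m) (Fin m) ℂ)
  refine ⟨?_, map_sum_smul_mul_sum_smul (Φ.restrictScalars ℝ) hproj' hadd' hE horth c c⟩
  rw [map_sum]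
  exact isSelfAdjoint_sum _ fun i _ => by
    rw [LinearMapClass.map_smul_of_tower]
    exact (IsSelfAdjoint.all (c i)).smul (hproj' _ (hE i)).isSelfAdjoint
end

section
/- Let φ : 𝒫_c → 𝒫_c preserve the transition probability in M_n(ℂ) with 5c/2 ≤ n. If P, Q ∈ 𝒫_c commute, then φ(P) and φ(Q) commute. -/
/-!
Let `P, Q ∈ 𝒫_c` commute, `d = tr (P Q)` and `e = c - d`. Inside the kernel of `P + Q - P Q`,
of rank `n - 2c + d`, pick orthogonal projections `X`, `V` of ranks `d` and `e` (possible when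
`2c + e ≤ n`) and put `E₁ = Q - P Q + X`, `E₂ = P - P Q + X`, `E₅ = P Q + V`, all in `𝒫_c`.
They satisfy `P ⊥ E₁`, `Q ⊥ E₂`, `P + E₁ = Q + E₂`, `E₅ ⊥ E₁, E₂`, `P ≤ E₂ + E₅`,
`Q ≤ E₁ + E₅`. Between projections, orthogonality and inclusion are read off from traces of
products, so the images `A = φ P`, `B = φ Q`, `Fᵢ = φ Eᵢ` satisfy the same relations. These give
`A F₅ = A B` and `B F₅ = B A`, hence (with their adjoints) `A B = A B A = B A`.

If instead `2c + e > n`, then `2c + d ≤ n` because `5c ≤ 2n`, so the first case applies to the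
commuting pair `P, E₂` (with `tr (P E₂) = e`), and `P + E₁ = Q + E₂` turns `[φ P, φ E₂] = 0`
into `[φ P, φ Q] = 0`.
-/

open Matrix

section Configurations

variable {R : Type*}

structure OrthogonalSumEq [Mul R] [Add R] [Zero R] (P E Q F : R) : Prop where
  orthogonal_left : P * E = 0
  orthogonal_right : Q * F = 0
  add_eq_add : P + E = Q + F

structure CommutationWitness [Mul R] [Add R] [Zero R] (P Q E₁ E₂ E₅ : R) : Prop
    extends OrthogonalSumEq P E₁ Q E₂ where
  orthogonal₁₅ : E₁ * E₅ = 0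
  orthogonal₂₅ : E₂ * E₅ = 0
  mul_add_eq_left : P * (E₂ + E₅) = P
  mul_add_eq_right : Q * (E₁ + E₅) = Q

theorem commute_of_mul_eq_of_isIdempotentElem [Semigroup R] {A B F : R} (hF : IsIdempotentElem F)
    (hAF : A * F = A * B) (hFA : F * A = B * A) (hBF : B * F = B * A) (hFB : F * B = A * B) :
    Commute A B :=
  calc A * B = A * F * F := by rw [mul_assoc, hF.eq, hAF]
    _ = A * B * A := by rw [hAF, mul_assoc, hBF, mul_assoc]
    _ = F * F * A := by rw [← hFB, mul_assoc F, ← hFA, mul_assoc]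
    _ = B * A := by rw [hF.eq, hFA]

variable [Ring R] {A B F₁ F₂ F₅ P Q X V : R}

theorem OrthogonalSumEq.mul_eq_sub (w : OrthogonalSumEq A F₁ B F₂) (hA : IsIdempotentElem A) :
    A * F₂ = A - A * B := by
  rw [eq_sub_iff_add_eq, ← mul_add, add_comm, ← w.add_eq_add, mul_add, hA.eq, w.orthogonal_left,
    add_zero]

theorem OrthogonalSumEq.symm (w : OrthogonalSumEq A F₁ B F₂) : OrthogonalSumEq B F₂ A F₁ :=
  ⟨w.orthogonal_right, w.orthogonal_left, w.add_eq_add.symm⟩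

variable [StarRing R]

theorem IsStarProjection.mul_eq_zero_symm (hP : IsStarProjection P) (hQ : IsStarProjection Q)
    (h : P * Q = 0) : Q * P = 0 :=
  (hP.isSelfAdjoint.commute_of_mul_eq_zero hQ.isSelfAdjoint h).eq ▸ h

theorem OrthogonalSumEq.commute_iff (w : OrthogonalSumEq A F₁ B F₂) (hA : IsStarProjection A)
    (hB : IsSelfAdjoint B) (hF₂ : IsSelfAdjoint F₂) : Commute A F₂ ↔ Commute A B := by
  rw [hA.isSelfAdjoint.commute_iff hF₂, hA.isSelfAdjoint.commute_iff hB,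
    w.mul_eq_sub hA.isIdempotentElem]
  exact ⟨fun h => by simpa using hA.isSelfAdjoint.sub h, hA.isSelfAdjoint.sub⟩

theorem CommutationWitness.commute (w : CommutationWitness A B F₁ F₂ F₅) (hA : IsStarProjection A)
    (hB : IsStarProjection B) (hF₅ : IsStarProjection F₅) : Commute A B := by
  have hAF₅ : A * F₅ = A * B := by
    rw [← add_sub_cancel_left (A * F₂) (A * F₅), ← mul_add, w.mul_add_eq_left,
      w.mul_eq_sub hA.isIdempotentElem, sub_sub_cancel]
  have hBF₅ : B * F₅ = B * A := by
    rw [← add_sub_cancel_left (B * F₁) (B * F₅), ← mul_add, w.mul_add_eq_right,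
      w.symm.mul_eq_sub hB.isIdempotentElem, sub_sub_cancel]
  have star_swap {x z : R} (hx : IsSelfAdjoint x) (hz : IsSelfAdjoint z) (h : x * F₅ = x * z) :
      F₅ * x = z * x := by
    simpa [hx.star_eq, hz.star_eq, hF₅.isSelfAdjoint.star_eq] using congr(star $h)
  exact commute_of_mul_eq_of_isIdempotentElem hF₅.isIdempotentElem hAF₅
    (star_swap hA.isSelfAdjoint hB.isSelfAdjoint hAF₅) hBF₅
    (star_swap hB.isSelfAdjoint hA.isSelfAdjoint hBF₅)

theorem commutationWitness_of_commute (hP : IsStarProjection P) (hQ : IsStarProjection Q)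
    (hPQ : Commute P Q) (hX : IsStarProjection X) (hPX : P * X = 0)
    (hQX : Q * X = 0) (hPV : P * V = 0) (hQV : Q * V = 0) (hXV : X * V = 0) :
    CommutationWitness P Q (Q - P * Q + X) (P - P * Q + X) (P * Q + V) := by
  have hPP (Y : R) : P * (P * Y) = P * Y := by rw [← mul_assoc, hP.isIdempotentElem.eq]
  have hQP (Y : R) : Q * (P * Y) = P * (Q * Y) := by rw [← mul_assoc, ← hPQ.eq, mul_assoc]
  have hXP (Y : R) : X * (P * Y) = 0 := by rw [← mul_assoc, hP.mul_eq_zero_symm hX hPX, zero_mul]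
  refine ⟨⟨?_, ?_, by abel⟩, ?_, ?_, ?_, ?_⟩ <;>
    simp only [mul_add, add_mul, mul_sub, sub_mul, mul_assoc, hP.isIdempotentElem.eq,
      hQ.isIdempotentElem.eq, hPQ.eq.symm, hPP, hQP, hXP, hPX, hQX, hPV, hQV, hXV, mul_zero] <;>
    abel

end Configurations

section Trace

variable {m R : Type*} [Fintype m] [CommRing R] [PartialOrder R] [StarRing R] [StarOrderedRing R]
  [NoZeroDivisors R] {p q : Matrix m m R}

theorem IsStarProjection.trace_mul_eq_zero_iff (hp : IsStarProjection p) (hq : IsStarProjection q) :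
    (p * q).trace = 0 ↔ p * q = 0 := by
  rw [← trace_conjTranspose_mul_self_eq_zero_iff, conjTranspose_mul, ← star_eq_conjTranspose,
    ← star_eq_conjTranspose, hp.isSelfAdjoint.star_eq, hq.isSelfAdjoint.star_eq, mul_assoc,
    ← mul_assoc p, hp.isIdempotentElem.eq, trace_mul_comm q, mul_assoc, hq.isIdempotentElem.eq]

theorem IsStarProjection.eq_zero_of_trace_eq_zero (hp : IsStarProjection p) (h : p.trace = 0) :
    p = 0 := by
  rw [← (hp.trace_mul_eq_zero_iff hp).mp (by rwa [hp.isIdempotentElem.eq]), hp.isIdempotentElem.eq]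

variable [DecidableEq m]

theorem IsStarProjection.trace_mul_eq_trace_iff (hp : IsStarProjection p)
    (hq : IsStarProjection q) :
    (p * q).trace = p.trace ↔ p * q = p := by
  rw [eq_comm, ← sub_eq_zero, ← trace_sub, ← mul_one_sub, hp.trace_mul_eq_zero_iff hq.one_sub,
    mul_one_sub, sub_eq_zero, eq_comm]

theorem IsStarProjection.eq_add_of_trace_eq_add {G B F : Matrix m m R} (hG : IsStarProjection G)
    (hB : IsStarProjection B) (hF : IsStarProjection F) (hBG : B * G = B) (hFG : F * G = F)
    (hBF : B * F = 0) (htr : G.trace = B.trace + F.trace) : G = B + F := by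
  have hsub : IsStarProjection (G - (B + F)) :=
    (hB.add hF hBF).sub_of_mul_eq_left hG (by rw [add_mul, hBG, hFG])
  rw [← sub_eq_zero]
  exact hsub.eq_zero_of_trace_eq_zero (by rw [trace_sub, trace_add, htr, sub_self])

end Trace

section TransitionProb

variable {m R : Type*} [Fintype m] [CommRing R] [StarRing R]

structure PreservesTransitionProb (S : Set (Matrix m m R)) (φ : Matrix m m R → Matrix m m R) :
    Prop where
  isStarProjection : ∀ P ∈ S, IsStarProjection P
  isStarProjection_map : ∀ P ∈ S, IsStarProjection (φ P)
  trace_mul_map : ∀ P ∈ S, ∀ Q ∈ S, (φ P * φ Q).trace = (P * Q).trace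

namespace PreservesTransitionProb

variable {S : Set (Matrix m m R)} {φ : Matrix m m R → Matrix m m R}
  {P Q E F E₁ E₂ E₅ : Matrix m m R}

theorem trace_map (h : PreservesTransitionProb S φ) (hP : P ∈ S) : (φ P).trace = P.trace := by
  simpa [(h.isStarProjection_map P hP).isIdempotentElem.eq,
    (h.isStarProjection P hP).isIdempotentElem.eq] using h.trace_mul_map P hP P hP

variable [PartialOrder R] [StarOrderedRing R] [NoZeroDivisors R]

theorem map_mul_map_eq_zero (h : PreservesTransitionProb S φ) (hP : P ∈ S) (hQ : Q ∈ S)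
    (hPQ : P * Q = 0) : φ P * φ Q = 0 := by
  rw [← (h.isStarProjection_map P hP).trace_mul_eq_zero_iff (h.isStarProjection_map Q hQ),
    h.trace_mul_map P hP Q hQ, hPQ, trace_zero]

variable [DecidableEq m]

theorem map_mul_add_eq_left (h : PreservesTransitionProb S φ) (hP : P ∈ S) (hE : E ∈ S)
    (hF : F ∈ S) (hEF : E * F = 0) (hPEF : P * (E + F) = P) : φ P * (φ E + φ F) = φ P := by
  rw [← (h.isStarProjection_map P hP).trace_mul_eq_trace_iff ((h.isStarProjection_map E hE).add
    (h.isStarProjection_map F hF) (h.map_mul_map_eq_zero hE hF hEF)), mul_add, trace_add,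
    h.trace_mul_map P hP E hE, h.trace_mul_map P hP F hF, ← trace_add, ← mul_add, hPEF,
    h.trace_map hP]

theorem orthogonalSumEq_map (h : PreservesTransitionProb S φ) (hP : P ∈ S) (hE : E ∈ S)
    (hQ : Q ∈ S) (hF : F ∈ S) (w : OrthogonalSumEq P E Q F) :
    OrthogonalSumEq (φ P) (φ E) (φ Q) (φ F) := by
  have hPE := h.map_mul_map_eq_zero hP hE w.orthogonal_left
  refine ⟨hPE, h.map_mul_map_eq_zero hQ hF w.orthogonal_right, ?_⟩
  have hFQ : F * Q = 0 :=
    (h.isStarProjection Q hQ).mul_eq_zero_symm (h.isStarProjection F hF) w.orthogonal_right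
  apply IsStarProjection.eq_add_of_trace_eq_add
    ((h.isStarProjection_map P hP).add (h.isStarProjection_map E hE) hPE)
    (h.isStarProjection_map Q hQ) (h.isStarProjection_map F hF)
  · refine h.map_mul_add_eq_left hQ hP hE w.orthogonal_left ?_
    rw [w.add_eq_add, mul_add, w.orthogonal_right, add_zero,
      (h.isStarProjection Q hQ).isIdempotentElem.eq]
  · refine h.map_mul_add_eq_left hF hP hE w.orthogonal_left ?_
    rw [w.add_eq_add, mul_add, hFQ, zero_add, (h.isStarProjection F hF).isIdempotentElem.eq]
  · exact h.map_mul_map_eq_zero hQ hF w.orthogonal_right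
  · rw [trace_add, h.trace_map hP, h.trace_map hE, h.trace_map hQ, h.trace_map hF,
      ← trace_add, ← trace_add, w.add_eq_add]

theorem commutationWitness_map (h : PreservesTransitionProb S φ) (hP : P ∈ S) (hQ : Q ∈ S)
    (hE₁ : E₁ ∈ S) (hE₂ : E₂ ∈ S) (hE₅ : E₅ ∈ S) (w : CommutationWitness P Q E₁ E₂ E₅) :
    CommutationWitness (φ P) (φ Q) (φ E₁) (φ E₂) (φ E₅) where
  toOrthogonalSumEq := h.orthogonalSumEq_map hP hE₁ hQ hE₂ w.toOrthogonalSumEq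
  orthogonal₁₅ := h.map_mul_map_eq_zero hE₁ hE₅ w.orthogonal₁₅
  orthogonal₂₅ := h.map_mul_map_eq_zero hE₂ hE₅ w.orthogonal₂₅
  mul_add_eq_left := h.map_mul_add_eq_left hP hE₂ hE₅ w.orthogonal₂₅ w.mul_add_eq_left
  mul_add_eq_right := h.map_mul_add_eq_left hQ hE₁ hE₅ w.orthogonal₁₅ w.mul_add_eq_right

end PreservesTransitionProb

end TransitionProb

namespace Matrix

variable {n α : Type*} [Fintype n] [DecidableEq n]

def coordProj [Zero α] [One α] (T : Finset n) : Matrix n n α :=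
  diagonal fun i => if i ∈ T then 1 else 0

variable [Semiring α]

theorem coordProj_mul_coordProj (S T : Finset n) :
    (coordProj S : Matrix n n α) * coordProj T = coordProj (S ∩ T) := by
  simp only [coordProj, diagonal_mul_diagonal, Finset.mem_inter, ite_zero_mul_ite_zero, mul_one]

theorem trace_coordProj (T : Finset n) : (coordProj T : Matrix n n α).trace = T.card := by
  simp [coordProj, trace_diagonal]

theorem isStarProjection_coordProj [StarRing α] (T : Finset n) :
    IsStarProjection (coordProj T : Matrix n n α) where
  isIdempotentElem := by rw [IsIdempotentElem, coordProj_mul_coordProj, Finset.inter_self]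
  isSelfAdjoint := by
    simp only [IsSelfAdjoint, coordProj, star_eq_conjTranspose, diagonal_conjTranspose]
    congr 1
    ext i
    by_cases h : i ∈ T <;> simp [h]

end Matrix

section Spectral

variable {n 𝕜 : Type*} [Fintype n] [DecidableEq n] [RCLike 𝕜] {M : Matrix n n 𝕜}

theorem IsStarProjection.exists_eq_coordProj (hM : IsStarProjection M) :
    ∃ (f : Matrix n n 𝕜 ≃⋆ₐ[𝕜] Matrix n n 𝕜) (S : Finset n), M = f (coordProj S) := by
  have hH : M.IsHermitian := hM.isSelfAdjoint
  set f := Unitary.conjStarAlgAut 𝕜 (Matrix n n 𝕜) hH.eigenvectorUnitary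
  set D := diagonal (RCLike.ofReal ∘ hH.eigenvalues : n → 𝕜)
  have hD : IsIdempotentElem D := by
    have := (hM.map f.symm).isIdempotentElem
    rwa [hH.spectral_theorem, StarAlgEquiv.symm_apply_apply] at this
  refine ⟨f, Finset.univ.filter fun i => hH.eigenvalues i = 1, ?_⟩
  refine hH.spectral_theorem.trans ?_
  congr 2
  ext i
  have hi : IsIdempotentElem (hH.eigenvalues i) := by
    have := congr_fun (diagonal_injective ((diagonal_mul_diagonal _ _).symm.trans hD.eq)) i
    simpa only [IsIdempotentElem, Function.comp_apply, ← RCLike.ofReal_mul, RCLike.ofReal_inj]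
      using this
  rcases IsIdempotentElem.iff_eq_zero_or_one.mp hi with h | h <;> simp [h]

theorem IsStarProjection.exists_trace_eq_natCast (hM : IsStarProjection M) :
    ∃ k : ℕ, M.trace = k := by
  obtain ⟨f, S, rfl⟩ := hM.exists_eq_coordProj
  exact ⟨S.card, by rw [trace_map, trace_coordProj]⟩

theorem IsStarProjection.exists_subprojection_trace_eq (hM : IsStarProjection M) {k a : ℕ}
    (hk : M.trace = k) (ha : a ≤ k) :
    ∃ X, IsStarProjection X ∧ M * X = X ∧ X.trace = a := by
  obtain ⟨f, S, rfl⟩ := hM.exists_eq_coordProj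
  rw [trace_map, trace_coordProj, Nat.cast_inj] at hk
  obtain ⟨T, hTS, rfl⟩ := Finset.exists_subset_card_eq (hk ▸ ha)
  refine ⟨f (coordProj T), (isStarProjection_coordProj T).map f, ?_,
    by rw [trace_map, trace_coordProj]⟩
  rw [← map_mul, coordProj_mul_coordProj, Finset.inter_eq_right.mpr hTS]

theorem IsStarProjection.exists_orthogonal_subprojections (hM : IsStarProjection M) {k a b : ℕ}
    (hk : M.trace = k) (hab : a + b ≤ k) :
    ∃ X V, IsStarProjection X ∧ IsStarProjection V ∧ M * X = X ∧ M * V = V ∧ X * V = 0 ∧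
      X.trace = a ∧ V.trace = b := by
  obtain ⟨X, hX, hMX, htX⟩ := hM.exists_subprojection_trace_eq hk (a := a) (by omega)
  have hMX' : IsStarProjection (M - X) := hX.sub_of_mul_eq_right hM hMX
  obtain ⟨V, hV, hV', htV⟩ := hMX'.exists_subprojection_trace_eq (k := k - a) (a := b)
    (by rw [trace_sub, hk, htX, Nat.cast_sub (by omega)]) (by omega)
  have hXM : X * M = X := by
    simpa [hX.isSelfAdjoint.star_eq, hM.isSelfAdjoint.star_eq] using congr(star $hMX)
  refine ⟨X, V, hX, hV, hMX, ?_, ?_, htX, htV⟩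
  · rw [← hV', ← mul_assoc, mul_sub, hM.isIdempotentElem.eq, hMX]
  · rw [← hV', ← mul_assoc, mul_sub, hX.isIdempotentElem.eq, hXM, sub_self, zero_mul]

end Spectral

section Grassmann

open scoped ComplexOrder

def grassmann (m 𝕜 : Type*) [Fintype m] [RCLike 𝕜] (c : ℕ) : Set (Matrix m m 𝕜) :=
  {P | IsStarProjection P ∧ P.trace = c}

theorem memGrassmann_iff {n c : ℕ} {P : Matrix (Fin n) (Fin n) ℂ} :
    MemGrassmann n c P ↔ P ∈ grassmann (Fin n) ℂ c :=
  ⟨fun ⟨hs, hi, ht⟩ => ⟨⟨hi, hs⟩, ht⟩, fun ⟨⟨hi, hs⟩, ht⟩ => ⟨hs, hi, ht⟩⟩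

variable {m 𝕜 : Type*} [Fintype m] [DecidableEq m] [RCLike 𝕜] {c d e k : ℕ} {P Q : Matrix m m 𝕜}
  {φ : Matrix m m 𝕜 → Matrix m m 𝕜}

theorem exists_trace_mul_eq_natCast (hP : P ∈ grassmann m 𝕜 c) (hQ : IsStarProjection Q)
    (hPQ : Commute P Q) : ∃ d e : ℕ, (P * Q).trace = d ∧ d + e = c := by
  have hPQ' := hP.1.mul hQ hPQ
  obtain ⟨d, hd⟩ := hPQ'.exists_trace_eq_natCast
  obtain ⟨e, he⟩ := (hPQ'.sub_of_mul_eq_left hP.1 (by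
    rw [mul_assoc, ← hPQ.eq, ← mul_assoc, hP.1.isIdempotentElem.eq])).exists_trace_eq_natCast
  rw [trace_sub, hP.2, hd, sub_eq_iff_eq_add'] at he
  exact ⟨d, e, hd, by exact_mod_cast he.symm⟩

theorem exists_orthogonal_pair_of_commute (hP : P ∈ grassmann m 𝕜 c) (hQ : Q ∈ grassmann m 𝕜 c)
    (hPQ : Commute P Q) (hd : (P * Q).trace = d) {a b : ℕ}
    (hab : 2 * c + a + b ≤ Fintype.card m + d) :
    ∃ X V, IsStarProjection X ∧ IsStarProjection V ∧ P * X = 0 ∧ Q * X = 0 ∧ P * V = 0 ∧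
      Q * V = 0 ∧ X * V = 0 ∧ X.trace = (a : 𝕜) ∧ V.trace = (b : 𝕜) := by
  set N := 1 - (P + Q - P * Q) with hN_def
  have hN : IsStarProjection N := (IsStarProjection.add_sub_mul_of_commute hPQ hP.1 hQ.1).one_sub
  have hPN : P * N = 0 := by
    rw [hN_def, mul_sub, mul_one, mul_sub, mul_add, ← mul_assoc, hP.1.isIdempotentElem.eq]
    abel
  have hQN : Q * N = 0 := by
    rw [hN_def, mul_sub, mul_one, mul_sub, mul_add, ← mul_assoc, ← hPQ.eq, mul_assoc,
      hQ.1.isIdempotentElem.eq]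
    abel
  obtain ⟨l, hl⟩ := hN.exists_trace_eq_natCast
  have hlcard : l + 2 * c = Fintype.card m + d := by
    have : (l : 𝕜) + 2 * c = Fintype.card m + d := by
      rw [← hl, hN_def, trace_sub, trace_one, trace_sub, trace_add, hP.2, hQ.2, hd]
      ring
    exact_mod_cast this
  obtain ⟨X, V, hX, hV, hNX, hNV, hXV, htX, htV⟩ :=
    hN.exists_orthogonal_subprojections hl (a := a) (b := b) (by omega)
  have below {A Y : Matrix m m 𝕜} (hA : A * N = 0) (hY : N * Y = Y) : A * Y = 0 := by
    rw [← hY, ← mul_assoc, hA, zero_mul]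
  exact ⟨X, V, hX, hV, below hPN hNX, below hQN hNX, below hPN hNV, below hQN hNV, hXV, htX, htV⟩

theorem exists_commutationWitness (hP : P ∈ grassmann m 𝕜 c) (hQ : Q ∈ grassmann m 𝕜 c)
    (hPQ : Commute P Q) (hd : (P * Q).trace = d) (hk : 2 * c + k ≤ Fintype.card m) :
    ∃ E₁ E₂ E₅, E₁ ∈ grassmann m 𝕜 c ∧ E₂ ∈ grassmann m 𝕜 c ∧ IsStarProjection E₅ ∧
      E₅.trace = ((d + k : ℕ) : 𝕜) ∧ Commute P E₂ ∧ (P * E₂).trace = c - d ∧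
      CommutationWitness P Q E₁ E₂ E₅ := by
  obtain ⟨X, V, hX, hV, hPX, hQX, hPV, hQV, hXV, htX, htV⟩ :=
    exists_orthogonal_pair_of_commute hP hQ hPQ hd (a := d) (b := k) (by omega)
  obtain ⟨⟨hP, htP⟩, ⟨hQ, htQ⟩⟩ := And.intro hP hQ
  have hPQ' : IsStarProjection (P * Q) := hP.mul hQ hPQ
  have hPE₂ : P * (P - P * Q + X) = P - P * Q := by
    rw [mul_add, mul_sub, ← mul_assoc, hP.isIdempotentElem.eq, hPX, add_zero]
  have hE₂P : (P - P * Q + X) * P = P - P * Q := by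
    rw [add_mul, sub_mul, hP.mul_eq_zero_symm hX hPX, add_zero, mul_assoc, ← hPQ.eq, ← mul_assoc,
      hP.isIdempotentElem.eq]
  refine ⟨Q - P * Q + X, P - P * Q + X, P * Q + V, ⟨?_, ?_⟩, ⟨?_, ?_⟩, ?_, ?_, hPE₂.trans hE₂P.symm,
    ?_, commutationWitness_of_commute hP hQ hPQ hX hPX hQX hPV hQV hXV⟩
  · refine (hPQ'.sub_of_mul_eq_left hQ ?_).add hX ?_
    · rw [mul_assoc, hQ.isIdempotentElem.eq]
    · rw [sub_mul, hQX, mul_assoc, hQX, mul_zero, sub_zero]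
  · rw [trace_add, trace_sub, htQ, hd, htX, sub_add_cancel]
  · refine (hPQ'.sub_of_mul_eq_left hP ?_).add hX ?_
    · rw [mul_assoc, ← hPQ.eq, ← mul_assoc, hP.isIdempotentElem.eq]
    · rw [sub_mul, hPX, mul_assoc, hQX, mul_zero, sub_zero]
  · rw [trace_add, trace_sub, htP, hd, htX, sub_add_cancel]
  · exact hPQ'.add hV (by rw [mul_assoc, hQV, mul_zero])
  · rw [trace_add, hd, htV, Nat.cast_add]
  · rw [hPE₂, trace_sub, htP, hd]

theorem PreservesTransitionProb.commute_map_of_two_mul_add_le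
    (h : PreservesTransitionProb (grassmann m 𝕜 c) φ) (hP : P ∈ grassmann m 𝕜 c)
    (hQ : Q ∈ grassmann m 𝕜 c) (hPQ : Commute P Q) (hd : (P * Q).trace = d) (hde : d + e = c)
    (hn : 2 * c + e ≤ Fintype.card m) : Commute (φ P) (φ Q) := by
  obtain ⟨E₁, E₂, E₅, hE₁, hE₂, hE₅, htE₅, -, -, w⟩ := exists_commutationWitness hP hQ hPQ hd hn
  have hE₅' : E₅ ∈ grassmann m 𝕜 c := ⟨hE₅, hde ▸ htE₅⟩
  exact (h.commutationWitness_map hP hQ hE₁ hE₂ hE₅' w).commute (h.isStarProjection_map P hP)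
    (h.isStarProjection_map Q hQ) (h.isStarProjection_map E₅ hE₅')

theorem PreservesTransitionProb.commute_map (h : PreservesTransitionProb (grassmann m 𝕜 c) φ)
    (hn : 5 * c ≤ 2 * Fintype.card m) (hP : P ∈ grassmann m 𝕜 c) (hQ : Q ∈ grassmann m 𝕜 c)
    (hPQ : Commute P Q) : Commute (φ P) (φ Q) := by
  obtain ⟨d, e, hd, hde⟩ := exists_trace_mul_eq_natCast hP hQ.1 hPQ
  rcases le_or_gt (2 * c + e) (Fintype.card m) with hle | hgt
  · exact h.commute_map_of_two_mul_add_le hP hQ hPQ hd hde hle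
  obtain ⟨E₁, E₂, E₅, hE₁, hE₂, -, -, hPE₂, htPE₂, w⟩ :=
    exists_commutationWitness hP hQ hPQ hd (k := 0) (by omega)
  have hPE₂' : (P * E₂).trace = e := by rw [htPE₂, ← hde, Nat.cast_add, add_sub_cancel_left]
  refine ((h.orthogonalSumEq_map hP hE₁ hQ hE₂ w.toOrthogonalSumEq).commute_iff
    (h.isStarProjection_map P hP) (h.isStarProjection_map Q hQ).isSelfAdjoint
    (h.isStarProjection_map E₂ hE₂).isSelfAdjoint).mp ?_
  exact h.commute_map_of_two_mul_add_le hP hE₂ hPE₂ hPE₂' (add_comm e d ▸ hde) (by omega)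

end Grassmann

theorem stmt13_general {n c : ℕ} (h5c : 5 * c ≤ 2 * n)
    (φ : Matrix (Fin n) (Fin n) ℂ → Matrix (Fin n) (Fin n) ℂ)
    (hmap : ∀ P, MemGrassmann n c P → MemGrassmann n c (φ P))
    (hpres : ∀ P Q, MemGrassmann n c P → MemGrassmann n c Q →
      (φ P * φ Q).trace = (P * Q).trace)
    (P Q : Matrix (Fin n) (Fin n) ℂ)
    (hP : MemGrassmann n c P) (hQ : MemGrassmann n c Q)
    (hcomm : P * Q = Q * P) :
    φ P * φ Q = φ Q * φ P := by
  have hφ : PreservesTransitionProb (grassmann (Fin n) ℂ c) φ :=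
    ⟨fun _ hP => hP.1, fun P hP => (memGrassmann_iff.mp (hmap P (memGrassmann_iff.mpr hP))).1,
      fun P hP Q hQ => hpres P Q (memGrassmann_iff.mpr hP) (memGrassmann_iff.mpr hQ)⟩
  exact (hφ.commute_map (by simpa using h5c) (memGrassmann_iff.mp hP) (memGrassmann_iff.mp hQ)
    hcomm).eq

/-- If `5c/2 ≤ n`, a transition probability preserving map on `𝒫_c` preserves
commutativity. -/
theorem stmt13 {n c : ℕ} (hc0 : 0 < c) (h5c : 5 * c ≤ 2 * n)
    (φ : Matrix (Fin n) (Fin n) ℂ → Matrix (Fin n) (Fin n) ℂ)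
    (hmap : ∀ P, MemGrassmann n c P → MemGrassmann n c (φ P))
    (hpres : ∀ P Q, MemGrassmann n c P → MemGrassmann n c Q →
      (φ P * φ Q).trace = (P * Q).trace)
    (P Q : Matrix (Fin n) (Fin n) ℂ)
    (hP : MemGrassmann n c P) (hQ : MemGrassmann n c Q)
    (hcomm : P * Q = Q * P) :
    φ P * φ Q = φ Q * φ P :=
  stmt13_general h5c φ hmap hpres P Q hP hQ hcomm
end

section
/- Let φ : 𝒫_c → 𝒫_c in M_n(ℂ) preserve the transition probability, and suppose φ extends to a trace-preserving Jordan *-homomorphism Φ : M_n(ℂ) → M_n(ℂ). If φ is surjective, then Φ is a *-automorphism or a *-anti-automorphism of M_n(ℂ). -/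
open Matrix

/-!
A trace-preserving Jordan homomorphism `Φ` of `M_n(ℂ)` satisfies `tr(Φ A Φ B) = tr(A B)`, so it
is injective and hence bijective. Herstein's theorem then applies: for a Jordan homomorphism onto
a 2-torsion-free prime ring, the defects `Φ(ab) - Φ a Φ b` and `Φ(ab) - Φ b Φ a` satisfy
`D z E + E z D = 0` for all `z`, so one of them vanishes for each pair `(a, b)`; as both are
biadditive and a group is never the union of two proper subgroups, one of them vanishes
identically.
-/

instance Matrix.instIsAddTorsionFree {m n α : Type*} [AddMonoid α] [IsAddTorsionFree α] :
    IsAddTorsionFree (Matrix m n α) :=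
  inferInstanceAs (IsAddTorsionFree (m → n → α))

theorem eq_of_add_self_eq_add_self {M : Type*} [AddMonoid M] [IsAddTorsionFree M] {x y : M}
    (h : x + x = y + y) : x = y :=
  IsAddTorsionFree.nsmul_right_injective two_ne_zero (by simpa only [two_nsmul] using h)

theorem AddMonoidHom.eq_zero_or_eq_zero_of_forall {G M : Type*} [AddZeroClass G]
    [AddZeroClass M] {u v : G →+ M} (h : ∀ x, u x = 0 ∨ v x = 0) : u = 0 ∨ v = 0 := by
  by_contra! huv
  obtain ⟨x, hx⟩ := DFunLike.ne_iff.mp huv.1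
  obtain ⟨y, hy⟩ := DFunLike.ne_iff.mp huv.2
  have hvx := (h x).resolve_left hx
  have huy := (h y).resolve_right hy
  rcases h (x + y) with hxy | hxy
  · exact hx (by simpa [huy] using hxy)
  · exact hy (by simpa [hvx] using hxy)

def IsPrimeRing (R : Type*) [NonUnitalRing R] : Prop :=
  ∀ a b : R, (∀ z, a * z * b = 0) → a = 0 ∨ b = 0

theorem IsPrimeRing.eq_zero_or_eq_zero_of_mul_mul_add_mul_mul {R : Type*} [NonUnitalRing R]
    [IsAddTorsionFree R] (hR : IsPrimeRing R) {a b : R} (h : ∀ z, a * z * b + b * z * a = 0) :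
    a = 0 ∨ b = 0 := by
  have swap : ∀ z, a * z * b = -(b * z * a) := fun z => eq_neg_of_add_eq_zero_left (h z)
  -- Swapping twice gives `a u a v b = b u a v a`, while one swap gives its negative.
  have hbuava : ∀ u v, b * u * a * v * a = 0 := by
    intro u v
    have h1 : a * (u * a * v) * b = -(b * (u * a * v) * a) := swap _
    have h2 : a * (u * a * v) * b = b * (u * a * v) * a := by
      calc a * (u * a * v) * b = a * u * (a * v * b) := by noncomm_ring
        _ = -(a * u * b) * v * a := by rw [swap v]; noncomm_ring
        _ = b * (u * a * v) * a := by rw [swap u]; noncomm_ring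
    simpa only [mul_assoc] using self_eq_neg.mp (h2.symm.trans h1)
  refine or_iff_not_imp_left.mpr fun ha => ?_
  have hbua : ∀ u, b * u * a = 0 := fun u => (hR _ _ (hbuava u)).resolve_right ha
  exact (hR _ _ hbua).resolve_right ha

theorem Matrix.isPrimeRing {n α : Type*} [Fintype n] [DecidableEq n] [Ring α]
    [NoZeroDivisors α] : IsPrimeRing (Matrix n n α) := by
  intro a b h
  refine or_iff_not_imp_left.mpr fun ha => ?_
  obtain ⟨i, j, hij⟩ : ∃ i j, a i j ≠ 0 := by
    by_contra! h0
    exact ha (Matrix.ext h0)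
  ext k l
  have hentry : (a * single j k (1 : α) * b) i l = a i j * b k l := by
    simp [mul_apply, single_apply, ite_and]
  rw [h, zero_apply] at hentry
  exact (mul_eq_zero.mp hentry.symm).resolve_left hij

section Jordan

variable {R S : Type*} [NonUnitalRing R] [NonUnitalRing S]

def IsJordanHom (f : R →+ S) : Prop :=
  ∀ a b, f (a * b + b * a) = f a * f b + f b * f a

def mulDefect (f : R →+ S) : R →+ R →+ S :=
  (AddMonoidHom.mul : R →+ R →+ R).compr₂ f - (AddMonoidHom.mul.compl₂ f).comp f

def antimulDefect (f : R →+ S) : R →+ R →+ S :=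
  (AddMonoidHom.mul : R →+ R →+ R).compr₂ f - ((AddMonoidHom.mul.compl₂ f).comp f).flip

@[simp]
theorem mulDefect_apply (f : R →+ S) (a b : R) :
    mulDefect f a b = f (a * b) - f a * f b :=
  rfl

@[simp]
theorem antimulDefect_apply (f : R →+ S) (a b : R) :
    antimulDefect f a b = f (a * b) - f b * f a :=
  rfl

namespace IsJordanHom

variable {f : R →+ S} (hf : IsJordanHom f)
include hf

theorem map_mul_self [IsAddTorsionFree S] (a : R) : f (a * a) = f a * f a :=
  eq_of_add_self_eq_add_self (by simpa only [map_add] using hf a a)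

theorem map_mul_mul_self [IsAddTorsionFree S] (a b : R) :
    f (a * b * a) = f a * f b * f a := by
  refine eq_of_add_self_eq_add_self ?_
  have e : a * b * a + a * b * a
      = a * (a * b + b * a) + (a * b + b * a) * a - (a * a * b + b * (a * a)) := by
    noncomm_ring
  rw [← map_add, e, map_sub, hf, hf, hf, map_mul_self hf]
  noncomm_ring

theorem map_mul_mul_add_mul_mul [IsAddTorsionFree S] (a b c : R) :
    f (a * b * c + c * b * a) = f a * f b * f c + f c * f b * f a := by
  have e : a * b * c + c * b * a = (a + c) * b * (a + c) - a * b * a - c * b * c := by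
    noncomm_ring
  rw [e, map_sub, map_sub, map_mul_mul_self hf, map_mul_mul_self hf, map_mul_mul_self hf,
    map_add]
  noncomm_ring

theorem mulDefect_mul_mul_antimulDefect_add [IsAddTorsionFree S] (a b x : R) :
    mulDefect f a b * f x * antimulDefect f a b
      + antimulDefect f a b * f x * mulDefect f a b = 0 := by
  have hsum : f (b * a) = f a * f b + f b * f a - f (a * b) := by
    rw [eq_sub_iff_add_eq', ← map_add]; exact hf a b
  -- Expand `f((ab) x (ba) + (ba) x (ab))` in two ways.
  have hsandwich : f (a * b) * f x * f (b * a) + f (b * a) * f x * f (a * b)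
      = f a * f b * f x * (f b * f a) + f b * f a * f x * (f a * f b) := by
    have e₁ : a * b * x * (b * a) = a * (b * x * b) * a := by noncomm_ring
    have e₂ : b * a * x * (a * b) = b * (a * x * a) * b := by noncomm_ring
    rw [← map_mul_mul_add_mul_mul hf, map_add, e₁, e₂, map_mul_mul_self hf,
      map_mul_mul_self hf, map_mul_mul_self hf, map_mul_mul_self hf]
    noncomm_ring
  rw [hsum] at hsandwich
  simp only [mulDefect_apply, antimulDefect_apply]
  rw [← sub_eq_zero.mpr hsandwich.symm]
  noncomm_ring

theorem mul_or_antimul [IsAddTorsionFree S] (hS : IsPrimeRing S)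
    (hsurj : Function.Surjective f) :
    (∀ a b, f (a * b) = f a * f b) ∨ ∀ a b, f (a * b) = f b * f a := by
  have hab : ∀ a b, mulDefect f a b = 0 ∨ antimulDefect f a b = 0 := fun a b =>
    hS.eq_zero_or_eq_zero_of_mul_mul_add_mul_mul fun z => by
      obtain ⟨x, rfl⟩ := hsurj z
      exact mulDefect_mul_mul_antimulDefect_add hf a b x
  rcases AddMonoidHom.eq_zero_or_eq_zero_of_forall fun a =>
      AddMonoidHom.eq_zero_or_eq_zero_of_forall (hab a) with h | h
  · exact Or.inl fun a b => sub_eq_zero.mp (DFunLike.congr_fun (DFunLike.congr_fun h a) b)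
  · exact Or.inr fun a b => sub_eq_zero.mp (DFunLike.congr_fun (DFunLike.congr_fun h a) b)

end IsJordanHom

end Jordan

namespace IsJordanHom

variable {m n R : Type*} [Fintype m] [Fintype n] [CommRing R] [IsAddTorsionFree R]
  {f : Matrix m m R →+ Matrix n n R} (hf : IsJordanHom f)
  (htrace : ∀ A, (f A).trace = A.trace)
include hf htrace

theorem trace_map_mul_map (A B : Matrix m m R) : (f A * f B).trace = (A * B).trace := by
  refine eq_of_add_self_eq_add_self ?_
  have h := htrace (A * B + B * A)
  rwa [hf, trace_add, trace_add, trace_mul_comm (f B), trace_mul_comm B] at h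

theorem injective_of_map_trace : Function.Injective f := by
  refine (injective_iff_map_eq_zero f).mpr fun A hA => ext_iff_trace_mul_right.mpr fun x => ?_
  rw [← trace_map_mul_map hf htrace, hA]
  simp

end IsJordanHom

theorem stmt16_general {n : ℕ}
    (Φ : Matrix (Fin n) (Fin n) ℂ →ₗ[ℂ] Matrix (Fin n) (Fin n) ℂ)
    (hjordan : ∀ A B, Φ (A * B + B * A) = Φ A * Φ B + Φ B * Φ A)
    (htrace : ∀ A : Matrix (Fin n) (Fin n) ℂ, (Φ A).trace = A.trace) :
    Function.Bijective Φ ∧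
      ((∀ A B, Φ (A * B) = Φ A * Φ B) ∨ (∀ A B, Φ (A * B) = Φ B * Φ A)) := by
  have hΦ : IsJordanHom Φ.toAddMonoidHom := hjordan
  have hinj : Function.Injective Φ := hΦ.injective_of_map_trace htrace
  have hbij : Function.Bijective Φ := ⟨hinj, LinearMap.injective_iff_surjective.mp hinj⟩
  exact ⟨hbij, hΦ.mul_or_antimul Matrix.isPrimeRing hbij.2⟩

/-- If a surjective transition probability preserving map `φ` on `𝒫_c` extends to a
trace-preserving Jordan *-homomorphism `Φ` of `M_n(ℂ)`, then `Φ` is a *-automorphism or a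
*-anti-automorphism. -/
theorem stmt16 {n c : ℕ} (hc0 : 0 < c) (hcn : c < n) (hhalf : 2 * c ≠ n)
    (φ : Matrix (Fin n) (Fin n) ℂ → Matrix (Fin n) (Fin n) ℂ)
    (hmap : ∀ P, MemGrassmann n c P → MemGrassmann n c (φ P))
    (hpres : ∀ P Q, MemGrassmann n c P → MemGrassmann n c Q →
      (φ P * φ Q).trace = (P * Q).trace)
    (hsurj : ∀ Q, MemGrassmann n c Q → ∃ P, MemGrassmann n c P ∧ φ P = Q)
    (Φ : Matrix (Fin n) (Fin n) ℂ →ₗ[ℂ] Matrix (Fin n) (Fin n) ℂ)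
    (hjordan : ∀ A B, Φ (A * B + B * A) = Φ A * Φ B + Φ B * Φ A)
    (hstar : ∀ A : Matrix (Fin n) (Fin n) ℂ, Φ Aᴴ = (Φ A)ᴴ)
    (htrace : ∀ A : Matrix (Fin n) (Fin n) ℂ, (Φ A).trace = A.trace)
    (hext : ∀ P, MemGrassmann n c P → Φ P = φ P) :
    Function.Bijective Φ ∧
      ((∀ A B, Φ (A * B) = Φ A * Φ B) ∨ (∀ A B, Φ (A * B) = Φ B * Φ A)) :=
  stmt16_general Φ hjordan htrace
end
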